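/- Consider the PDS method under the saddle-point assumption with parameters s ∈ [1,2], ρ > 0, δ ∈ (0,1), step sizes α_k = γ_k/‖T⁽ᵏ⁾‖₂ with γ_k = (k+1)^{−1+δ/2}, and assume T⁽ᵏ⁾ ≠ 0 for all k and that the chosen subgradient selections g₀, g₁, …, g_m are bounded in norm on every bounded subset of ℝⁿ. Then there exists a constant C > 0 such that for every ε ∈ (0,1] and every natural number K with K ≥ C·ε^{−2s/δ}, the set I_ε(K) := {k ∈ {0,…,K} : ‖F(x⁽ᵏ⁾)‖₂ + ‖A x⁽ᵏ⁾ − b‖₂ ≤ ε} is nonempty and min_{k ∈ I_ε(K)} f₀(x⁽ᵏ⁾) ≤ p* + ε. -/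

import Mathlib

/-!
Write `z = (x, λ, ν)` and `T(z)` for the PDS direction. The subgradient inequalities give
`⟪T(z), z - z*⟫ ≥ L(x, λ*, ν*) - p* + ρ s (‖F(x)‖ ^ s + ‖A x - b‖ ^ s)`, and the saddle point
makes the right-hand side nonnegative. For the normalised step `z⁺ = z - (γ / ‖T‖) T` one has
`‖z⁺ - z*‖² = ‖z - z*‖² - 2 (γ / ‖T‖) ⟪T(z), z - z*⟫ + γ²`, so, since `∑ γₖ² < ∞` for `δ < 1`,
the iterates stay bounded, hence so does `‖T⁽ᵏ⁾‖`, and telescoping gives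
`∑_{k ≤ K} γₖ ⟪T⁽ᵏ⁾, z⁽ᵏ⁾ - z*⟫ ≤ D`. As `∑_{k ≤ K} γₖ ≥ (K + 1) ^ (δ / 2)`, some `k ≤ K` has
`⟪T⁽ᵏ⁾, z⁽ᵏ⁾ - z*⟫ ≤ D (K + 1) ^ (-δ / 2) ≤ t₀ ε ^ s` once `K ≥ C ε ^ (-2s / δ)`, and this one
quantity bounds both the infeasibility and `f₀(x⁽ᵏ⁾) - p*`.
-/

open scoped RealInnerProductSpace Classical
open Matrix

/-- `A x` for `A` an `l × n` real matrix and `x ∈ ℝⁿ`, as Euclidean spaces. -/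
noncomputable def mulVecE {l n : ℕ} (A : Matrix (Fin l) (Fin n) ℝ)
    (x : EuclideanSpace ℝ (Fin n)) : EuclideanSpace ℝ (Fin l) :=
  Matrix.toEuclideanLin A x

/-- `F(x) = (max{f₁(x),0}, …, max{f_m(x),0})`. -/
noncomputable def Fplus {n m : ℕ} (f : Fin m → EuclideanSpace ℝ (Fin n) → ℝ)
    (x : EuclideanSpace ℝ (Fin n)) : EuclideanSpace ℝ (Fin m) :=
  (WithLp.equiv 2 (Fin m → ℝ)).symm fun i => max (f i x) 0

/-- The Lagrangian `L(x, λ, ν) = f₀(x) + λᵀF(x) + νᵀ(Ax - b)`. -/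
noncomputable def Lag {n m l : ℕ} (f0 : EuclideanSpace ℝ (Fin n) → ℝ)
    (f : Fin m → EuclideanSpace ℝ (Fin n) → ℝ)
    (A : Matrix (Fin l) (Fin n) ℝ) (b : EuclideanSpace ℝ (Fin l))
    (x : EuclideanSpace ℝ (Fin n)) (lam : EuclideanSpace ℝ (Fin m))
    (nu : EuclideanSpace ℝ (Fin l)) : ℝ :=
  f0 x + ⟪lam, Fplus f x⟫ + ⟪nu, mulVecE A x - b⟫

open Finset
open scoped Matrix.Norms.L2Operator

section PenaltyGrad

variable {E : Type*} [NormedAddCommGroup E] [InnerProductSpace ℝ E]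

/-- A subgradient of `‖·‖ ^ s` at `v`. -/
noncomputable def penaltyGrad (s : ℝ) (v : E) : E :=
  if v ≠ 0 then (s * ‖v‖ ^ (s - 2)) • v else 0

theorem inner_penaltyGrad_self {s : ℝ} (hs : 0 < s) (v : E) :
    ⟪penaltyGrad s v, v⟫ = s * ‖v‖ ^ s := by
  by_cases hv : v = 0
  · simp [penaltyGrad, hv, Real.zero_rpow hs.ne']
  · rw [penaltyGrad, if_pos hv, real_inner_smul_left, real_inner_self_eq_norm_sq, mul_assoc,
      ← Real.rpow_natCast, ← Real.rpow_add (norm_pos_iff.mpr hv)]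
    norm_num

theorem norm_penaltyGrad_le {s : ℝ} (hs : 0 ≤ s) (v : E) :
    ‖penaltyGrad s v‖ ≤ s * ‖v‖ ^ (s - 1) := by
  by_cases hv : v = 0
  · simp only [penaltyGrad, hv, ne_eq, not_true_eq_false, if_false, norm_zero]
    exact mul_nonneg hs (Real.rpow_nonneg le_rfl _)
  · rw [penaltyGrad, if_pos hv, norm_smul, Real.norm_of_nonneg (by positivity), mul_assoc,
      ← Real.rpow_add_one (norm_ne_zero_iff.mpr hv), show s - 2 + 1 = s - 1 by ring]

theorem Real.rpow_le_max_one {t p : ℝ} (ht : 0 ≤ t) (hp0 : 0 ≤ p) (hp1 : p ≤ 1) :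
    t ^ p ≤ max 1 t :=
  calc t ^ p ≤ max 1 t ^ p := Real.rpow_le_rpow ht (le_max_right _ _) hp0
    _ ≤ max 1 t ^ (1 : ℝ) := Real.rpow_le_rpow_of_exponent_le (le_max_left _ _) hp1
    _ = max 1 t := Real.rpow_one _

theorem norm_penaltyGrad_le_max {s : ℝ} (hs1 : 1 ≤ s) (hs2 : s ≤ 2) (v : E) :
    ‖penaltyGrad s v‖ ≤ s * max 1 ‖v‖ :=
  (norm_penaltyGrad_le (by linarith) v).trans <| by
    gcongr; exact Real.rpow_le_max_one (norm_nonneg v) (by linarith) (by linarith)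

theorem norm_add_smul_penaltyGrad_le {ρ s : ℝ} (hρ : 0 ≤ ρ) (hs1 : 1 ≤ s) (hs2 : s ≤ 2)
    (u v : E) : ‖u + ρ • penaltyGrad s v‖ ≤ ‖u‖ + ρ * (s * max 1 ‖v‖) := by
  refine (norm_add_le _ _).trans ?_
  rw [norm_smul, Real.norm_of_nonneg hρ]
  gcongr
  exact norm_penaltyGrad_le_max hs1 hs2 v

theorem penaltyGrad_apply_nonneg {m : ℕ} {s : ℝ} (hs : 0 ≤ s) {v : EuclideanSpace ℝ (Fin m)}
    (hv : ∀ i, 0 ≤ v i) (i : Fin m) : 0 ≤ penaltyGrad s v i := by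
  unfold penaltyGrad
  split_ifs
  · exact mul_nonneg (by positivity) (hv i)
  · simp

end PenaltyGrad

section InnerProductSpace

variable {E : Type*} [NormedAddCommGroup E] [InnerProductSpace ℝ E]

theorem norm_add_smul_sub_sq (x x' t : E) (a : ℝ) :
    ‖x + a • t - x'‖ ^ 2 = ‖x - x'‖ ^ 2 + 2 * a * ⟪t, x - x'⟫ + a ^ 2 * ‖t‖ ^ 2 := by
  rw [add_sub_right_comm, norm_add_sq_real, real_inner_smul_right, norm_smul, mul_pow,
    Real.norm_eq_abs, sq_abs, real_inner_comm]
  ring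

variable {F G : Type*} [NormedAddCommGroup F] [InnerProductSpace ℝ F]
  [NormedAddCommGroup G] [InnerProductSpace ℝ G]

theorem norm_sq_triple_step (x x' t : E) (y y' u : F) (z z' v : G) (a : ℝ) :
    ‖x - a • t - x'‖ ^ 2 + ‖y + a • u - y'‖ ^ 2 + ‖z + a • v - z'‖ ^ 2
      = ‖x - x'‖ ^ 2 + ‖y - y'‖ ^ 2 + ‖z - z'‖ ^ 2
        - 2 * a * (⟪t, x - x'⟫ - ⟪u, y - y'⟫ - ⟪v, z - z'⟫)
        + a ^ 2 * (‖t‖ ^ 2 + ‖u‖ ^ 2 + ‖v‖ ^ 2) := by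
  rw [sub_eq_add_neg x, ← neg_smul, norm_add_smul_sub_sq, norm_add_smul_sub_sq,
    norm_add_smul_sub_sq]
  ring

theorem norm_sq_triple_normalized_step (x x' t : E) (y y' u : F) (z z' v : G)
    {γ N : ℝ} (hN : N = √(‖t‖ ^ 2 + ‖u‖ ^ 2 + ‖v‖ ^ 2)) (hN0 : 0 < N) :
    ‖x - (γ / N) • t - x'‖ ^ 2 + ‖y + (γ / N) • u - y'‖ ^ 2 + ‖z + (γ / N) • v - z'‖ ^ 2
      = ‖x - x'‖ ^ 2 + ‖y - y'‖ ^ 2 + ‖z - z'‖ ^ 2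
        - 2 * (γ / N) * (⟪t, x - x'⟫ - ⟪u, y - y'⟫ - ⟪v, z - z'⟫) + γ ^ 2 := by
  have hN2 : N ^ 2 = ‖t‖ ^ 2 + ‖u‖ ^ 2 + ‖v‖ ^ 2 := by rw [hN, Real.sq_sqrt (by positivity)]
  rw [norm_sq_triple_step, ← hN2, div_pow, div_mul_cancel₀ _ (by positivity)]

end InnerProductSpace

section Normed

variable {E F G : Type*} [NormedAddCommGroup E] [NormedAddCommGroup F] [NormedAddCommGroup G]

theorem sqrt_norm_sq_triple_pos {t : E} {u : F} {v : G}
    (h : ¬ (t = 0 ∧ u = 0 ∧ v = 0)) : 0 < √(‖t‖ ^ 2 + ‖u‖ ^ 2 + ‖v‖ ^ 2) := by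
  rw [Real.sqrt_pos]
  contrapose! h
  have ht := sq_nonneg ‖t‖
  have hu := sq_nonneg ‖u‖
  have hv := sq_nonneg ‖v‖
  refine ⟨?_, ?_, ?_⟩ <;> rw [← norm_eq_zero, ← sq_eq_zero_iff] <;> linarith

theorem sqrt_norm_sq_triple_le (t : E) (u : F) (v : G) :
    √(‖t‖ ^ 2 + ‖u‖ ^ 2 + ‖v‖ ^ 2) ≤ ‖t‖ + ‖u‖ + ‖v‖ :=
  Real.sqrt_le_iff.mpr ⟨by positivity, by nlinarith [norm_nonneg t, norm_nonneg u, norm_nonneg v]⟩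

end Normed

section Euclidean

theorem EuclideanSpace.norm_sq_le_card_mul {m : ℕ} {x : EuclideanSpace ℝ (Fin m)} {c : ℝ}
    (hx : ∀ i, |x i| ≤ c) : ‖x‖ ^ 2 ≤ m * c ^ 2 := by
  rw [EuclideanSpace.real_norm_sq_eq]
  calc ∑ i, x i ^ 2 ≤ ∑ _i : Fin m, c ^ 2 := by
        refine sum_le_sum fun i _ => ?_
        exact sq_le_sq' (neg_le_of_abs_le (hx i)) (le_of_abs_le (hx i))
    _ = m * c ^ 2 := by simp

theorem EuclideanSpace.inner_eq_sum_mul {m : ℕ} (x y : EuclideanSpace ℝ (Fin m)) :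
    ⟪x, y⟫ = ∑ i, x i * y i := by
  simp [PiLp.inner_apply, mul_comm]

variable {n l : ℕ}

theorem norm_mulVecE_le (A : Matrix (Fin l) (Fin n) ℝ) (x : EuclideanSpace ℝ (Fin n)) :
    ‖mulVecE A x‖ ≤ ‖A‖ * ‖x‖ :=
  (toEuclideanLin.trans LinearMap.toContinuousLinearMap A).le_opNorm x

theorem mulVecE_sub (A : Matrix (Fin l) (Fin n) ℝ) (x y : EuclideanSpace ℝ (Fin n)) :
    mulVecE A (x - y) = mulVecE A x - mulVecE A y :=
  map_sub _ x y

theorem inner_mulVecE_transpose (A : Matrix (Fin l) (Fin n) ℝ) (w : EuclideanSpace ℝ (Fin l))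
    (v : EuclideanSpace ℝ (Fin n)) : ⟪mulVecE Aᵀ w, v⟫ = ⟪w, mulVecE A v⟫ := by
  rw [mulVecE, mulVecE, ← conjTranspose_eq_transpose_of_trivial,
    toEuclideanLin_conjTranspose_eq_adjoint, LinearMap.adjoint_inner_left]

end Euclidean

section PDS

variable {n m l : ℕ} {f0 : EuclideanSpace ℝ (Fin n) → ℝ}
  {f : Fin m → EuclideanSpace ℝ (Fin n) → ℝ} {A : Matrix (Fin l) (Fin n) ℝ}
  {b : EuclideanSpace ℝ (Fin l)} {xstar x : EuclideanSpace ℝ (Fin n)}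
  {g0x : EuclideanSpace ℝ (Fin n)} {gx : Fin m → EuclideanSpace ℝ (Fin n)}

/-- The `x`-component of the PDS direction `T`, with `c = λ + ρ ϱ` and `w = ν + ρ ς`. -/
noncomputable def primalDir (g0x : EuclideanSpace ℝ (Fin n))
    (gx : Fin m → EuclideanSpace ℝ (Fin n)) (A : Matrix (Fin l) (Fin n) ℝ)
    (c : EuclideanSpace ℝ (Fin m)) (w : EuclideanSpace ℝ (Fin l)) : EuclideanSpace ℝ (Fin n) :=
  g0x + ∑ i, c i • gx i + mulVecE Aᵀ w

theorem Fplus_nonneg (f : Fin m → EuclideanSpace ℝ (Fin n) → ℝ) (x : EuclideanSpace ℝ (Fin n))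
    (i : Fin m) : 0 ≤ Fplus f x i :=
  le_max_right _ _

theorem Fplus_apply_le_inner (hxfeas : ∀ i, f i xstar ≤ 0)
    (hg : ∀ i, ⟪gx i, xstar - x⟫ ≤ max (f i xstar) 0 - max (f i x) 0) (i : Fin m) :
    Fplus f x i ≤ ⟪gx i, x - xstar⟫ := by
  have h := hg i
  rw [max_eq_right (hxfeas i), ← neg_sub, inner_neg_right] at h
  change max (f i x) 0 ≤ _
  linarith

theorem norm_Fplus_sq_le (hxfeas : ∀ i, f i xstar ≤ 0)
    (hg : ∀ i, ⟪gx i, xstar - x⟫ ≤ max (f i xstar) 0 - max (f i x) 0) {M : ℝ}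
    (hM : ∀ i, ‖gx i‖ ≤ M) : ‖Fplus f x‖ ^ 2 ≤ m * (M * ‖x - xstar‖) ^ 2 := by
  refine EuclideanSpace.norm_sq_le_card_mul fun i => ?_
  rw [abs_of_nonneg (Fplus_nonneg f x i)]
  calc Fplus f x i ≤ ⟪gx i, x - xstar⟫ := Fplus_apply_le_inner hxfeas hg i
    _ ≤ ‖gx i‖ * ‖x - xstar‖ := real_inner_le_norm _ _
    _ ≤ M * ‖x - xstar‖ := by gcongr; exact hM i

/-- Subgradient inequality for `f₀ + ∑ cᵢ Fᵢ + ⟪w, A · - b⟫` at `x`, tested at `x*`. -/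
theorem sub_add_inner_le_inner_primalDir (hxfeas : ∀ i, f i xstar ≤ 0)
    (hxeq : mulVecE A xstar = b) (hg0 : ⟪g0x, xstar - x⟫ ≤ f0 xstar - f0 x)
    (hg : ∀ i, ⟪gx i, xstar - x⟫ ≤ max (f i xstar) 0 - max (f i x) 0)
    {c : EuclideanSpace ℝ (Fin m)} (hc : ∀ i, 0 ≤ c i) (w : EuclideanSpace ℝ (Fin l)) :
    f0 x - f0 xstar + ⟪c, Fplus f x⟫ + ⟪w, mulVecE A x - b⟫
      ≤ ⟪primalDir g0x gx A c w, x - xstar⟫ := by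
  have h0 : f0 x - f0 xstar ≤ ⟪g0x, x - xstar⟫ := by
    rw [← neg_sub, inner_neg_right] at hg0
    linarith
  have hF : ⟪c, Fplus f x⟫ ≤ ⟪∑ i, c i • gx i, x - xstar⟫ := by
    rw [EuclideanSpace.inner_eq_sum_mul, sum_inner]
    refine sum_le_sum fun i _ => ?_
    rw [real_inner_smul_left]
    exact mul_le_mul_of_nonneg_left (Fplus_apply_le_inner hxfeas hg i) (hc i)
  have hw : ⟪mulVecE Aᵀ w, x - xstar⟫ = ⟪w, mulVecE A x - b⟫ := by
    rw [inner_mulVecE_transpose, mulVecE_sub, hxeq]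
  rw [primalDir, inner_add_left, inner_add_left, hw]
  linarith

/-- `q = ⟪T(z), z - z*⟫` for `z = (x, lam, nu)` and `T(z) = (primalDir …, -F(x), -(A x - b))`. -/
theorem pds_pairing_bounds {pstar ρ s : ℝ} {lamstar : EuclideanSpace ℝ (Fin m)}
    {nustar : EuclideanSpace ℝ (Fin l)} (hxfeas : ∀ i, f i xstar ≤ 0)
    (hxeq : mulVecE A xstar = b) (hxval : f0 xstar = pstar)
    (hsaddle : pstar ≤ Lag f0 f A b x lamstar nustar)
    (hg0 : ⟪g0x, xstar - x⟫ ≤ f0 xstar - f0 x)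
    (hg : ∀ i, ⟪gx i, xstar - x⟫ ≤ max (f i xstar) 0 - max (f i x) 0) (hρ : 0 ≤ ρ) (hs : 1 ≤ s)
    {lam : EuclideanSpace ℝ (Fin m)} (hlam : ∀ i, 0 ≤ lam i) (nu : EuclideanSpace ℝ (Fin l)) :
    let q := ⟪primalDir g0x gx A (lam + ρ • penaltyGrad s (Fplus f x))
        (nu + ρ • penaltyGrad s (mulVecE A x - b)), x - xstar⟫
      - ⟪Fplus f x, lam - lamstar⟫ - ⟪mulVecE A x - b, nu - nustar⟫
    ρ * (‖Fplus f x‖ ^ s + ‖mulVecE A x - b‖ ^ s) ≤ q ∧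
      f0 x - pstar ≤ q + (‖lamstar‖ + ‖nustar‖) * (‖Fplus f x‖ + ‖mulVecE A x - b‖) := by
  intro q
  have hc (i : Fin m) : 0 ≤ (lam + ρ • penaltyGrad s (Fplus f x)) i :=
    add_nonneg (hlam i)
      (mul_nonneg hρ (penaltyGrad_apply_nonneg (by linarith) (Fplus_nonneg f x) i))
  have key := sub_add_inner_le_inner_primalDir hxfeas hxeq hg0 hg hc
    (nu + ρ • penaltyGrad s (mulVecE A x - b))
  rw [inner_add_left, inner_add_left, real_inner_smul_left, real_inner_smul_left,
    inner_penaltyGrad_self (by linarith), inner_penaltyGrad_self (by linarith)] at key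
  have hq : q = ⟪primalDir g0x gx A (lam + ρ • penaltyGrad s (Fplus f x))
        (nu + ρ • penaltyGrad s (mulVecE A x - b)), x - xstar⟫
      - ⟪lam, Fplus f x⟫ + ⟪lamstar, Fplus f x⟫
      - ⟪nu, mulVecE A x - b⟫ + ⟪nustar, mulVecE A x - b⟫ := by
    simp only [q, inner_sub_right, real_inner_comm (Fplus f x), real_inner_comm (mulVecE A x - b)]
    ring
  have hLag : Lag f0 f A b x lamstar nustar
      = f0 x + ⟪lamstar, Fplus f x⟫ + ⟪nustar, mulVecE A x - b⟫ := rfl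
  have hpen (t : ℝ) (ht : 0 ≤ t) : 0 ≤ ρ * t ^ s ∧ ρ * t ^ s ≤ ρ * (s * t ^ s) :=
    ⟨by positivity, by gcongr; exact le_mul_of_one_le_left (Real.rpow_nonneg ht s) hs⟩
  obtain ⟨hF0, hF⟩ := hpen ‖Fplus f x‖ (norm_nonneg _)
  obtain ⟨hr0, hr⟩ := hpen ‖mulVecE A x - b‖ (norm_nonneg _)
  have hlamF := neg_le_of_abs_le (abs_real_inner_le_norm lamstar (Fplus f x))
  have hnur := neg_le_of_abs_le (abs_real_inner_le_norm nustar (mulVecE A x - b))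
  have hcross : 0 ≤ ‖lamstar‖ * ‖mulVecE A x - b‖ + ‖nustar‖ * ‖Fplus f x‖ := by positivity
  constructor
  · linarith
  · linarith [show (‖lamstar‖ + ‖nustar‖) * (‖Fplus f x‖ + ‖mulVecE A x - b‖)
      = ‖lamstar‖ * ‖Fplus f x‖ + ‖nustar‖ * ‖mulVecE A x - b‖
        + (‖lamstar‖ * ‖mulVecE A x - b‖ + ‖nustar‖ * ‖Fplus f x‖) by ring]

theorem norm_primalDir_le {M : ℝ} (hg0 : ‖g0x‖ ≤ M) (hg : ∀ i, ‖gx i‖ ≤ M)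
    (c : EuclideanSpace ℝ (Fin m)) (w : EuclideanSpace ℝ (Fin l)) :
    ‖primalDir g0x gx A c w‖ ≤ M + m * (‖c‖ * M) + ‖Aᵀ‖ * ‖w‖ := by
  have hsum : ‖∑ i, c i • gx i‖ ≤ m * (‖c‖ * M) :=
    calc ‖∑ i, c i • gx i‖ ≤ ∑ i, ‖c i • gx i‖ := norm_sum_le _ _
      _ ≤ ∑ _i : Fin m, ‖c‖ * M := sum_le_sum fun i _ => by
          rw [norm_smul]
          exact mul_le_mul (PiLp.norm_apply_le c i) (hg i) (norm_nonneg _) (norm_nonneg _)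
      _ = m * (‖c‖ * M) := by simp
  calc _ ≤ ‖g0x‖ + ‖∑ i, c i • gx i‖ + ‖mulVecE Aᵀ w‖ := norm_add₃_le
    _ ≤ _ := by gcongr; exact norm_mulVecE_le _ _

theorem exists_pds_direction_norm_le {g0 : EuclideanSpace ℝ (Fin n) → EuclideanSpace ℝ (Fin n)}
    {g : Fin m → EuclideanSpace ℝ (Fin n) → EuclideanSpace ℝ (Fin n)}
    {lamstar : EuclideanSpace ℝ (Fin m)} {nustar : EuclideanSpace ℝ (Fin l)}
    {xk : ℕ → EuclideanSpace ℝ (Fin n)} {lamk : ℕ → EuclideanSpace ℝ (Fin m)}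
    {nuk : ℕ → EuclideanSpace ℝ (Fin l)} {ρ s B : ℝ}
    (hxfeas : ∀ i, f i xstar ≤ 0) (hxeq : mulVecE A xstar = b)
    (hg : ∀ i x y, ⟪g i x, y - x⟫ ≤ max (f i y) 0 - max (f i x) 0)
    (hbdd : ∀ B : Set (EuclideanSpace ℝ (Fin n)), Bornology.IsBounded B →
      ∃ M : ℝ, ∀ x ∈ B, ‖g0 x‖ ≤ M ∧ ∀ i, ‖g i x‖ ≤ M)
    (hs1 : 1 ≤ s) (hs2 : s ≤ 2) (hρ : 0 ≤ ρ)
    (hV : ∀ k, ‖xk k - xstar‖ ^ 2 + ‖lamk k - lamstar‖ ^ 2 + ‖nuk k - nustar‖ ^ 2 ≤ B) :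
    ∃ MT, ∀ k, √(‖primalDir (g0 (xk k)) (fun i => g i (xk k)) A
        (lamk k + ρ • penaltyGrad s (Fplus f (xk k)))
        (nuk k + ρ • penaltyGrad s (mulVecE A (xk k) - b))‖ ^ 2
      + ‖Fplus f (xk k)‖ ^ 2 + ‖mulVecE A (xk k) - b‖ ^ 2) ≤ MT := by
  set R := √B
  have hR0 : 0 ≤ R := Real.sqrt_nonneg B
  have hdist {E : Type} [NormedAddCommGroup E] (u v : E) (h : ‖u - v‖ ^ 2 ≤ B) : ‖u - v‖ ≤ R :=
    (Real.le_sqrt (norm_nonneg _) ((sq_nonneg _).trans h)).2 h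
  have hx (k : ℕ) : ‖xk k - xstar‖ ≤ R := hdist (xk k) xstar (by nlinarith [hV k])
  have hlam (k : ℕ) : ‖lamk k‖ ≤ ‖lamstar‖ + R :=
    norm_le_norm_add_norm_sub' (lamk k) lamstar |>.trans
      (by gcongr; exact hdist (lamk k) lamstar (by nlinarith [hV k]))
  have hnu (k : ℕ) : ‖nuk k‖ ≤ ‖nustar‖ + R :=
    norm_le_norm_add_norm_sub' (nuk k) nustar |>.trans
      (by gcongr; exact hdist (nuk k) nustar (by nlinarith [hV k]))
  obtain ⟨M, hM⟩ := hbdd (Metric.closedBall xstar R) Metric.isBounded_closedBall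
  have hM0 : 0 ≤ M := (norm_nonneg _).trans (hM xstar (Metric.mem_closedBall_self hR0)).1
  have hMk (k : ℕ) := hM (xk k) (mem_closedBall_iff_norm.2 (hx k))
  have hF (k : ℕ) : ‖Fplus f (xk k)‖ ≤ √m * (M * R) := by
    have h := norm_Fplus_sq_le hxfeas (fun i => hg i (xk k) xstar) (hMk k).2
    rw [← Real.sqrt_sq (norm_nonneg (Fplus f (xk k))), ← Real.sqrt_sq (by positivity : 0 ≤ M * R),
      ← Real.sqrt_mul (Nat.cast_nonneg m)]
    gcongr
    exact h.trans (by gcongr; exact hx k)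
  have hr (k : ℕ) : ‖mulVecE A (xk k) - b‖ ≤ ‖A‖ * R := by
    rw [← hxeq, ← mulVecE_sub]
    exact (norm_mulVecE_le _ _).trans (by gcongr; exact hx k)
  refine ⟨M + m * ((‖lamstar‖ + R + ρ * (s * max 1 (√m * (M * R)))) * M)
    + ‖Aᵀ‖ * (‖nustar‖ + R + ρ * (s * max 1 (‖A‖ * R))) + √m * (M * R) + ‖A‖ * R, fun k => ?_⟩
  refine (sqrt_norm_sq_triple_le _ _ _).trans ?_
  gcongr ?_ + ?_ + ?_
  · refine (norm_primalDir_le (hMk k).1 (hMk k).2 _ _).trans ?_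
    gcongr
    · exact (norm_add_smul_penaltyGrad_le hρ hs1 hs2 _ _).trans (by gcongr; exacts [hlam k, hF k])
    · exact (norm_add_smul_penaltyGrad_le hρ hs1 hs2 _ _).trans (by gcongr; exacts [hnu k, hr k])
  · exact hF k
  · exact hr k

end PDS

section Sequences

theorem apply_nonneg_of_succ_eq_add_smul {m : ℕ} {u v : ℕ → EuclideanSpace ℝ (Fin m)}
    {a : ℕ → ℝ} (h0 : ∀ i, 0 ≤ u 0 i) (ha : ∀ k, 0 ≤ a k) (hv : ∀ k i, 0 ≤ v k i)
    (hu : ∀ k, u (k + 1) = u k + a k • v k) (k : ℕ) (i : Fin m) : 0 ≤ u k i := by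
  induction k with
  | zero => exact h0 i
  | succ k ih =>
    rw [hu k]
    exact add_nonneg ih (mul_nonneg (ha k) (hv k i))

theorem le_add_tsum_of_descent {V q γ N : ℕ → ℝ} (hq : ∀ k, 0 ≤ q k) (hγ : ∀ k, 0 ≤ γ k)
    (hγs : Summable fun k => γ k ^ 2) (hN : ∀ k, 0 < N k)
    (hstep : ∀ k, V (k + 1) = V k - 2 * (γ k / N k) * q k + γ k ^ 2) (k : ℕ) :
    V k ≤ V 0 + ∑' j, γ j ^ 2 := by
  have hk : V k ≤ V 0 + ∑ j ∈ range k, γ j ^ 2 := by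
    induction k with
    | zero => simp
    | succ k ih =>
      have := mul_nonneg (div_nonneg (hγ k) (hN k).le) (hq k)
      rw [sum_range_succ, hstep k]
      linarith
  linarith [hγs.sum_le_tsum (range k) fun j _ => sq_nonneg (γ j)]

theorem sum_mul_le_of_descent {V q γ N : ℕ → ℝ} {B : ℝ} (hV : ∀ k, 0 ≤ V k)
    (hq : ∀ k, 0 ≤ q k) (hγ : ∀ k, 0 ≤ γ k) (hγs : Summable fun k => γ k ^ 2)
    (hN : ∀ k, 0 < N k) (hNB : ∀ k, N k ≤ B)
    (hstep : ∀ k, V (k + 1) = V k - 2 * (γ k / N k) * q k + γ k ^ 2) (K : ℕ) :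
    ∑ k ∈ range K, γ k * q k ≤ B / 2 * (V 0 + ∑' k, γ k ^ 2) := by
  have hB : 0 ≤ B := (hN 0).le.trans (hNB 0)
  have hterm (k : ℕ) : γ k * q k ≤ B / 2 * (V k - V (k + 1) + γ k ^ 2) :=
    have := hN k
    calc γ k * q k = N k * (γ k / N k * q k) := by field_simp
      _ ≤ B * (γ k / N k * q k) := by
        gcongr
        exacts [mul_nonneg (div_nonneg (hγ k) this.le) (hq k), hNB k]
      _ = B / 2 * (V k - V (k + 1) + γ k ^ 2) := by rw [hstep k]; ring
  calc _ ≤ ∑ k ∈ range K, B / 2 * (V k - V (k + 1) + γ k ^ 2) :=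
        sum_le_sum fun k _ => hterm k
    _ = B / 2 * (V 0 - V K + ∑ k ∈ range K, γ k ^ 2) := by
      rw [← mul_sum, sum_add_distrib, sum_range_sub']
    _ ≤ _ := by
      gcongr
      · linarith [hV K]
      · exact hγs.sum_le_tsum _ fun k _ => sq_nonneg (γ k)

theorem summable_sq_rpow_step {δ : ℝ} (hδ : δ < 1) :
    Summable fun k : ℕ => (((k : ℝ) + 1) ^ (-1 + δ / 2)) ^ 2 := by
  have h : Summable fun k : ℕ => ((k + 1 : ℕ) : ℝ) ^ (-2 + δ) :=
    (summable_nat_add_iff 1).2 (Real.summable_nat_rpow.2 (by linarith))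
  refine h.congr fun k => ?_
  rw [← Real.rpow_natCast, ← Real.rpow_mul (by positivity)]
  push_cast
  ring_nf

theorem rpow_le_sum_rpow_step {δ : ℝ} (hδ : δ ≤ 2) (K : ℕ) :
    ((K : ℝ) + 1) ^ (δ / 2) ≤ ∑ k ∈ range (K + 1), ((k : ℝ) + 1) ^ (-1 + δ / 2) := by
  have h := card_nsmul_le_sum (range (K + 1)) (fun k : ℕ => ((k : ℝ) + 1) ^ (-1 + δ / 2))
    (((K : ℝ) + 1) ^ (-1 + δ / 2)) fun k hk =>
      Real.rpow_le_rpow_of_nonpos (by positivity)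
        (by gcongr; exact_mod_cast Nat.lt_succ_iff.1 (mem_range.1 hk)) (by linarith)
  have hK := Real.rpow_add_one (x := (K : ℝ) + 1) (by positivity) (-1 + δ / 2)
  rw [card_range, nsmul_eq_mul, Nat.cast_add_one] at h
  rw [show -1 + δ / 2 + 1 = δ / 2 by ring] at hK
  linarith

theorem exists_le_div_of_sum_mul_le {γ q : ℕ → ℝ} {D P : ℝ} {K : ℕ} (hγ : ∀ k, 0 < γ k)
    (hD : 0 ≤ D) (hP : 0 < P) (hPγ : P ≤ ∑ k ∈ range (K + 1), γ k)
    (hsum : ∑ k ∈ range (K + 1), γ k * q k ≤ D) : ∃ k ≤ K, q k ≤ D / P := by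
  by_contra! h
  have hlt : (∑ k ∈ range (K + 1), γ k) * (D / P) < ∑ k ∈ range (K + 1), γ k * q k := by
    rw [sum_mul]
    exact sum_lt_sum_of_nonempty nonempty_range_add_one fun k hk =>
      mul_lt_mul_of_pos_left (h k (Nat.lt_succ_iff.1 (mem_range.1 hk))) (hγ k)
  have hle := mul_le_mul_of_nonneg_right hPγ (div_nonneg hD hP.le)
  rw [mul_div_cancel₀ _ hP.ne'] at hle
  linarith

end Sequences

section Rate

theorem add_le_and_le_of_le_mul_rpow {a b c φ q ρ s ε : ℝ} (ha : 0 ≤ a) (hb : 0 ≤ b)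
    (hc : 0 ≤ c) (hρ : 0 < ρ) (hs1 : 1 ≤ s) (hs2 : s ≤ 2) (hε0 : 0 < ε) (hε1 : ε ≤ 1)
    (hpen : ρ * (a ^ s + b ^ s) ≤ q) (hφ : φ ≤ q + c * (a + b))
    (hq : q ≤ min (1 / 2) (ρ * (4 * (1 + c))⁻¹ ^ 2) * ε ^ s) : a + b ≤ ε ∧ φ ≤ ε := by
  -- the threshold on `q` is what forces `a, b ≤ θ ε`
  set θ := (4 * (1 + c))⁻¹
  have hθ0 : 0 < θ := by positivity
  have hθc : 4 * (1 + c) * θ = 1 := mul_inv_cancel₀ (by positivity)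
  have hθs : θ ^ (2 : ℕ) ≤ θ ^ s := by
    rw [← Real.rpow_natCast]
    exact Real.rpow_le_rpow_of_exponent_ge hθ0 (by nlinarith) (by push_cast; exact hs2)
  have hεs : ε ^ s ≤ ε := by
    simpa using Real.rpow_le_rpow_of_exponent_ge hε0 hε1 hs1
  have hqθ : q ≤ ρ * (θ * ε) ^ s := by
    rw [Real.mul_rpow hθ0.le hε0.le]
    calc q ≤ ρ * θ ^ 2 * ε ^ s := hq.trans (by gcongr; exact min_le_right _ _)
      _ ≤ ρ * (θ ^ s * ε ^ s) := by rw [← mul_assoc]; gcongr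
  have hle {t : ℝ} (ht : 0 ≤ t) (hts : ρ * t ^ s ≤ q) : t ≤ θ * ε :=
    (Real.rpow_le_rpow_iff ht (by positivity) (by linarith)).1 <|
      le_of_mul_le_mul_left (hts.trans hqθ) hρ
  have hab : a + b ≤ 2 * θ * ε := by
    linarith [hle ha (by nlinarith [Real.rpow_nonneg hb s]),
      hle hb (by nlinarith [Real.rpow_nonneg ha s])]
  have hq2 : q ≤ ε / 2 := hq.trans <| by
    calc _ ≤ 1 / 2 * ε ^ s := by gcongr; exact min_le_left _ _
      _ ≤ ε / 2 := by linarith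
  constructor
  · nlinarith
  · nlinarith [mul_le_mul_of_nonneg_left hab hc]

theorem exists_rate_of_sum_mul_le {a b φ q γ : ℕ → ℝ} {c ρ s δ D : ℝ} (ha : ∀ k, 0 ≤ a k)
    (hb : ∀ k, 0 ≤ b k) (hc : 0 ≤ c) (hρ : 0 < ρ) (hs1 : 1 ≤ s) (hs2 : s ≤ 2) (hδ0 : 0 < δ)
    (hδ2 : δ ≤ 2) (hγ : ∀ k, γ k = ((k : ℝ) + 1) ^ (-1 + δ / 2))
    (hpen : ∀ k, ρ * (a k ^ s + b k ^ s) ≤ q k)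
    (hφ : ∀ k, φ k ≤ q k + c * (a k + b k))
    (hsum : ∀ K, ∑ k ∈ range (K + 1), γ k * q k ≤ D) :
    ∃ C : ℝ, 0 < C ∧ ∀ ε : ℝ, 0 < ε → ε ≤ 1 → ∀ K : ℕ,
      C * ε ^ (-(2 * s) / δ) ≤ (K : ℝ) → ∃ k ≤ K, a k + b k ≤ ε ∧ φ k ≤ ε := by
  set t₀ := min (1 / 2) (ρ * (4 * (1 + c))⁻¹ ^ 2)
  have ht₀ : 0 < t₀ := lt_min (by norm_num) (by positivity)
  set D' := max D 1
  have hD' : 0 < D' := lt_max_of_lt_right one_pos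
  refine ⟨(D' / t₀) ^ (2 / δ), by positivity, fun ε hε0 hε1 K hK => ?_⟩
  set P := ((K : ℝ) + 1) ^ (δ / 2)
  have hP : D' / t₀ * ε ^ (-s) ≤ P :=
    calc D' / t₀ * ε ^ (-s) = ((D' / t₀) ^ (2 / δ) * ε ^ (-(2 * s) / δ)) ^ (δ / 2) := by
          rw [Real.mul_rpow (by positivity) (by positivity), ← Real.rpow_mul (by positivity),
            ← Real.rpow_mul hε0.le]
          field_simp
          simp [mul_div_cancel₀ _ ht₀.ne']
      _ ≤ P := Real.rpow_le_rpow (by positivity) (by linarith) (by positivity)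
  have hDP : D' / P ≤ t₀ * ε ^ s := by
    rw [div_le_iff₀ (by positivity)]
    calc D' = t₀ * ε ^ s * (D' / t₀ * ε ^ (-s)) := by
          rw [Real.rpow_neg hε0.le]
          field_simp
      _ ≤ t₀ * ε ^ s * P := mul_le_mul_of_nonneg_left hP (by positivity)
  obtain ⟨k, hk, hqk⟩ := exists_le_div_of_sum_mul_le (P := P) (fun k => hγ k ▸ by positivity)
    hD'.le (by positivity) (by simpa only [hγ] using rpow_le_sum_rpow_step hδ2 K)
    ((hsum K).trans (le_max_left D 1))
  exact ⟨k, hk, add_le_and_le_of_le_mul_rpow (ha k) (hb k) hc hρ hs1 hs2 hε0 hε1 (hpen k) (hφ k)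
    (hqk.trans hDP)⟩

end Rate

theorem pds_complexity_general
    (n m l : ℕ)
    (f0 : EuclideanSpace ℝ (Fin n) → ℝ)
    (f : Fin m → EuclideanSpace ℝ (Fin n) → ℝ)
    (A : Matrix (Fin l) (Fin n) ℝ) (b : EuclideanSpace ℝ (Fin l))
    (pstar : ℝ)
    (xstar : EuclideanSpace ℝ (Fin n))
    (lamstar : EuclideanSpace ℝ (Fin m)) (nustar : EuclideanSpace ℝ (Fin l))
    -- x* is primal optimal with value p*
    (hxfeas : ∀ i, f i xstar ≤ 0) (hxeq : mulVecE A xstar = b)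
    (hxval : f0 xstar = pstar)
    -- saddle-point assumption
    (hsaddle2 : ∀ x, pstar ≤ Lag f0 f A b x lamstar nustar)
    -- parameters s ∈ [1,2], ρ > 0, δ ∈ (0,1)
    (s ρ δ : ℝ) (hs1 : 1 ≤ s) (hs2 : s ≤ 2) (hρ : 0 < ρ)
    (hδ0 : 0 < δ) (hδ1 : δ < 1)
    -- fixed subgradient selections g₀(x) ∈ ∂f₀(x), gᵢ(x) ∈ ∂Fᵢ(x),
    -- bounded in norm on every bounded subset of ℝⁿ
    (g0 : EuclideanSpace ℝ (Fin n) → EuclideanSpace ℝ (Fin n))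
    (hg0 : ∀ x y, ⟪g0 x, y - x⟫ ≤ f0 y - f0 x)
    (g : Fin m → EuclideanSpace ℝ (Fin n) → EuclideanSpace ℝ (Fin n))
    (hg : ∀ i x y, ⟪g i x, y - x⟫ ≤ max (f i y) 0 - max (f i x) 0)
    (hbdd : ∀ B : Set (EuclideanSpace ℝ (Fin n)), Bornology.IsBounded B →
      ∃ M : ℝ, ∀ x ∈ B, ‖g0 x‖ ≤ M ∧ ∀ i, ‖g i x‖ ≤ M)
    -- the PDS iterates z⁽ᵏ⁾ = (x⁽ᵏ⁾, λ⁽ᵏ⁾, ν⁽ᵏ⁾)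
    (xk : ℕ → EuclideanSpace ℝ (Fin n))
    (lamk : ℕ → EuclideanSpace ℝ (Fin m))
    (nuk : ℕ → EuclideanSpace ℝ (Fin l))
    (hlam0 : ∀ i, 0 ≤ lamk 0 i)
    -- the penalty terms ϱ⁽ᵏ⁾ and ς⁽ᵏ⁾
    (ϱ : ℕ → EuclideanSpace ℝ (Fin m))
    (hϱ : ∀ k, ϱ k = if Fplus f (xk k) ≠ 0 then
      (s * ‖Fplus f (xk k)‖ ^ (s - 2)) • Fplus f (xk k) else 0)
    (ς : ℕ → EuclideanSpace ℝ (Fin l))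
    (hς : ∀ k, ς k = if mulVecE A (xk k) ≠ b then
      (s * ‖mulVecE A (xk k) - b‖ ^ (s - 2)) • (mulVecE A (xk k) - b) else 0)
    -- T⁽ᵏ⁾: primal component Tx k and total Euclidean norm nT k
    (Tx : ℕ → EuclideanSpace ℝ (Fin n))
    (hTx : ∀ k, Tx k = g0 (xk k)
      + (∑ i, (lamk k i + ρ * ϱ k i) • g i (xk k))
      + mulVecE Aᵀ (nuk k + ρ • ς k))
    (nT : ℕ → ℝ)
    (hnT : ∀ k, nT k = Real.sqrt (‖Tx k‖ ^ 2 + ‖Fplus f (xk k)‖ ^ 2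
      + ‖mulVecE A (xk k) - b‖ ^ 2))
    -- T⁽ᵏ⁾ ≠ 0
    (hTne : ∀ k, ¬ (Tx k = 0 ∧ Fplus f (xk k) = 0 ∧ mulVecE A (xk k) - b = 0))
    -- step sizes αₖ = γₖ/‖T⁽ᵏ⁾‖₂ with γₖ = (k+1)^(-1+δ/2)
    (γ α : ℕ → ℝ)
    (hγ : ∀ k, γ k = ((k : ℝ) + 1) ^ (-1 + δ / 2))
    (hα : ∀ k, α k = γ k / nT k)
    -- the update z⁽ᵏ⁺¹⁾ = z⁽ᵏ⁾ - αₖ T⁽ᵏ⁾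
    (hxk : ∀ k, xk (k + 1) = xk k - α k • Tx k)
    (hlamk : ∀ k, lamk (k + 1) = lamk k + α k • Fplus f (xk k))
    (hnuk : ∀ k, nuk (k + 1) = nuk k + α k • (mulVecE A (xk k) - b))
    :
    ∃ C : ℝ, 0 < C ∧ ∀ ε : ℝ, 0 < ε → ε ≤ 1 → ∀ K : ℕ,
      C * ε ^ (-(2 * s) / δ) ≤ (K : ℝ) →
      ∃ k ≤ K, ‖Fplus f (xk k)‖ + ‖mulVecE A (xk k) - b‖ ≤ ε ∧
        f0 (xk k) ≤ pstar + ε := by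
  have hTx' (k : ℕ) : Tx k = primalDir (g0 (xk k)) (fun i => g i (xk k)) A
      (lamk k + ρ • penaltyGrad s (Fplus f (xk k)))
      (nuk k + ρ • penaltyGrad s (mulVecE A (xk k) - b)) := by
    have hϱ' : ϱ k = penaltyGrad s (Fplus f (xk k)) := by
      rw [hϱ k, penaltyGrad]
      congr
    have hς' : ς k = penaltyGrad s (mulVecE A (xk k) - b) := by
      rw [hς k, penaltyGrad]
      simp only [ne_eq, sub_eq_zero]
    rw [hTx k, ← hϱ', ← hς']
    rfl
  have hnT0 (k : ℕ) : 0 < nT k := hnT k ▸ sqrt_norm_sq_triple_pos (hTne k)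
  have hγ0 (k : ℕ) : 0 < γ k := hγ k ▸ by positivity
  have hlam := apply_nonneg_of_succ_eq_add_smul hlam0
    (fun k => hα k ▸ div_nonneg (hγ0 k).le (hnT0 k).le) (fun k => Fplus_nonneg f (xk k)) hlamk
  set q : ℕ → ℝ := fun k => ⟪Tx k, xk k - xstar⟫ - ⟪Fplus f (xk k), lamk k - lamstar⟫
    - ⟪mulVecE A (xk k) - b, nuk k - nustar⟫
  have hgap (k : ℕ) : ρ * (‖Fplus f (xk k)‖ ^ s + ‖mulVecE A (xk k) - b‖ ^ s) ≤ q k ∧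
      f0 (xk k) - pstar ≤ q k + (‖lamstar‖ + ‖nustar‖) *
        (‖Fplus f (xk k)‖ + ‖mulVecE A (xk k) - b‖) := by
    have h := pds_pairing_bounds hxfeas hxeq hxval (hsaddle2 (xk k)) (hg0 (xk k) xstar)
      (fun i => hg i (xk k) xstar) hρ.le hs1 (hlam k) (nuk k)
    rwa [← hTx' k] at h
  have hq0 (k : ℕ) : 0 ≤ q k := le_trans (by positivity) (hgap k).1
  set V : ℕ → ℝ := fun k => ‖xk k - xstar‖ ^ 2 + ‖lamk k - lamstar‖ ^ 2 + ‖nuk k - nustar‖ ^ 2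
  have hV (k : ℕ) : V (k + 1) = V k - 2 * (γ k / nT k) * q k + γ k ^ 2 := by
    simp only [V, hxk, hlamk, hnuk, hα]
    exact norm_sq_triple_normalized_step _ _ _ _ _ _ _ _ _ (hnT k) (hnT0 k)
  have hγs : Summable fun k => γ k ^ 2 := by simpa only [hγ] using summable_sq_rpow_step hδ1
  obtain ⟨MT, hMT⟩ := exists_pds_direction_norm_le hxfeas hxeq hg hbdd hs1 hs2 hρ.le
    (le_add_tsum_of_descent hq0 (fun k => (hγ0 k).le) hγs hnT0 hV)
  have hsum := sum_mul_le_of_descent (fun k => by positivity) hq0 (fun k => (hγ0 k).le) hγs hnT0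
    (fun k => by rw [hnT k, hTx' k]; exact hMT k) hV
  obtain ⟨C, hC, hrate⟩ := exists_rate_of_sum_mul_le (fun k => norm_nonneg _)
    (fun k => norm_nonneg _) (by positivity) hρ hs1 hs2 hδ0 (by linarith) hγ
    (fun k => (hgap k).1) (fun k => (hgap k).2) fun K => hsum (K + 1)
  refine ⟨C, hC, fun ε hε0 hε1 K hK => ?_⟩
  obtain ⟨k, hk, hfeas, hopt⟩ := hrate ε hε0 hε1 K hK
  exact ⟨k, hk, hfeas, by linarith⟩

/-- PDS main theorem: `O(ε^(-2s\/δ))` complexity of the primal-dual subgradient method. -/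
theorem pds_complexity
    (n m l : ℕ)
    (f0 : EuclideanSpace ℝ (Fin n) → ℝ)
    (f : Fin m → EuclideanSpace ℝ (Fin n) → ℝ)
    (hf0 : ConvexOn ℝ Set.univ f0)
    (hf : ∀ i, ConvexOn ℝ Set.univ (f i))
    (A : Matrix (Fin l) (Fin n) ℝ) (b : EuclideanSpace ℝ (Fin l))
    (pstar : ℝ)
    (xstar : EuclideanSpace ℝ (Fin n))
    (lamstar : EuclideanSpace ℝ (Fin m)) (nustar : EuclideanSpace ℝ (Fin l))
    -- x* is primal optimal with value p*
    (hxfeas : ∀ i, f i xstar ≤ 0) (hxeq : mulVecE A xstar = b)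
    (hxval : f0 xstar = pstar)
    -- saddle-point assumption
    (hlamstar : ∀ i, 0 ≤ lamstar i)
    (hsaddle_eq : Lag f0 f A b xstar lamstar nustar = pstar)
    (hsaddle1 : ∀ (lam : EuclideanSpace ℝ (Fin m)) (nu : EuclideanSpace ℝ (Fin l)),
      (∀ i, 0 ≤ lam i) → Lag f0 f A b xstar lam nu ≤ pstar)
    (hsaddle2 : ∀ x, pstar ≤ Lag f0 f A b x lamstar nustar)
    -- parameters s ∈ [1,2], ρ > 0, δ ∈ (0,1)
    (s ρ δ : ℝ) (hs1 : 1 ≤ s) (hs2 : s ≤ 2) (hρ : 0 < ρ)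
    (hδ0 : 0 < δ) (hδ1 : δ < 1)
    -- fixed subgradient selections g₀(x) ∈ ∂f₀(x), gᵢ(x) ∈ ∂Fᵢ(x),
    -- bounded in norm on every bounded subset of ℝⁿ
    (g0 : EuclideanSpace ℝ (Fin n) → EuclideanSpace ℝ (Fin n))
    (hg0 : ∀ x y, ⟪g0 x, y - x⟫ ≤ f0 y - f0 x)
    (g : Fin m → EuclideanSpace ℝ (Fin n) → EuclideanSpace ℝ (Fin n))
    (hg : ∀ i x y, ⟪g i x, y - x⟫ ≤ max (f i y) 0 - max (f i x) 0)
    (hbdd : ∀ B : Set (EuclideanSpace ℝ (Fin n)), Bornology.IsBounded B →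
      ∃ M : ℝ, ∀ x ∈ B, ‖g0 x‖ ≤ M ∧ ∀ i, ‖g i x‖ ≤ M)
    -- the PDS iterates z⁽ᵏ⁾ = (x⁽ᵏ⁾, λ⁽ᵏ⁾, ν⁽ᵏ⁾)
    (xk : ℕ → EuclideanSpace ℝ (Fin n))
    (lamk : ℕ → EuclideanSpace ℝ (Fin m))
    (nuk : ℕ → EuclideanSpace ℝ (Fin l))
    (hlam0 : ∀ i, 0 ≤ lamk 0 i)
    -- the penalty terms ϱ⁽ᵏ⁾ and ς⁽ᵏ⁾
    (ϱ : ℕ → EuclideanSpace ℝ (Fin m))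
    (hϱ : ∀ k, ϱ k = if Fplus f (xk k) ≠ 0 then
      (s * ‖Fplus f (xk k)‖ ^ (s - 2)) • Fplus f (xk k) else 0)
    (ς : ℕ → EuclideanSpace ℝ (Fin l))
    (hς : ∀ k, ς k = if mulVecE A (xk k) ≠ b then
      (s * ‖mulVecE A (xk k) - b‖ ^ (s - 2)) • (mulVecE A (xk k) - b) else 0)
    -- T⁽ᵏ⁾: primal component Tx k and total Euclidean norm nT k
    (Tx : ℕ → EuclideanSpace ℝ (Fin n))
    (hTx : ∀ k, Tx k = g0 (xk k)
      + (∑ i, (lamk k i + ρ * ϱ k i) • g i (xk k))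
      + mulVecE Aᵀ (nuk k + ρ • ς k))
    (nT : ℕ → ℝ)
    (hnT : ∀ k, nT k = Real.sqrt (‖Tx k‖ ^ 2 + ‖Fplus f (xk k)‖ ^ 2
      + ‖mulVecE A (xk k) - b‖ ^ 2))
    -- T⁽ᵏ⁾ ≠ 0
    (hTne : ∀ k, ¬ (Tx k = 0 ∧ Fplus f (xk k) = 0 ∧ mulVecE A (xk k) - b = 0))
    -- step sizes αₖ = γₖ/‖T⁽ᵏ⁾‖₂ with γₖ = (k+1)^(-1+δ/2)
    (γ α : ℕ → ℝ)
    (hγ : ∀ k, γ k = ((k : ℝ) + 1) ^ (-1 + δ / 2))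
    (hα : ∀ k, α k = γ k / nT k)
    -- the update z⁽ᵏ⁺¹⁾ = z⁽ᵏ⁾ - αₖ T⁽ᵏ⁾
    (hxk : ∀ k, xk (k + 1) = xk k - α k • Tx k)
    (hlamk : ∀ k, lamk (k + 1) = lamk k + α k • Fplus f (xk k))
    (hnuk : ∀ k, nuk (k + 1) = nuk k + α k • (mulVecE A (xk k) - b))
    :
    ∃ C : ℝ, 0 < C ∧ ∀ ε : ℝ, 0 < ε → ε ≤ 1 → ∀ K : ℕ,
      C * ε ^ (-(2 * s) / δ) ≤ (K : ℝ) →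
      ∃ k ≤ K, ‖Fplus f (xk k)‖ + ‖mulVecE A (xk k) - b‖ ≤ ε ∧
        f0 (xk k) ≤ pstar + ε :=
  pds_complexity_general n m l f0 f A b pstar xstar lamstar nustar hxfeas hxeq hxval hsaddle2 s ρ δ
    hs1 hs2 hρ hδ0 hδ1 g0 hg0 g hg hbdd xk lamk nuk hlam0 ϱ hϱ ς hς Tx hTx nT hnT hTne γ α hγ hα hxk
    hlamk hnuk
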